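/- Let m ≥ 2, 0 ≤ β < 1, α ∈ ℂ with α ≠ −1, let k(z) = z + ∑_{n≥2} k_n z^n be bi-univalent with k₂ ≠ 0, k₃ ≠ 0 and 2(1+2α)k₃ − (1+3α)k₂² ≠ 0, and let f(z) = z + ∑_{n≥2} a_n z^n belong to the class BV^k(m; α, β). Then |a₂| ≤ min{ √( m(1−β)/|2(1+2α)k₃ − (1+3α)k₂²| ) , m(1−β)/(|1+α| |k₂|) }. -/

import Mathlib

open MeasureTheory Set Metric Complex

noncomputable section

/-- The `n`-th MacLaurin coefficient of `f`, i.e. `f⁽ⁿ⁾(0)/n!`. -/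
def mc (f : ℂ → ℂ) (n : ℕ) : ℂ := iteratedDeriv n f 0 / (n.factorial : ℂ)

/-- The open unit disk in `ℂ`. -/
def unitDisk : Set ℂ := Metric.ball (0 : ℂ) 1

/-- The kernel `(1 - z e^{it})/(1 + z e^{it})`. -/
def pmKernel (z : ℂ) (t : ℝ) : ℂ :=
  (1 - z * Complex.exp (t * Complex.I)) / (1 + z * Complex.exp (t * Complex.I))

/-- The class `P_m` of functions with bounded boundary rotation: `p` is analytic on the unit
disk, `p 0 = 1`, and `p` is represented against a finite signed Borel measure
`μ = μp - μn` on `[0, 2π]` with `μ([0,2π]) = 1` and total variation `‖μ‖ ≤ m/2`. -/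
def MemPm (m : ℝ) (p : ℂ → ℂ) : Prop :=
  AnalyticOnNhd ℂ p unitDisk ∧ p 0 = 1 ∧
  ∃ μp μn : Measure ℝ, IsFiniteMeasure μp ∧ IsFiniteMeasure μn ∧
    (μp (Set.Icc 0 (2 * Real.pi))).toReal - (μn (Set.Icc 0 (2 * Real.pi))).toReal = 1 ∧
    (μp (Set.Icc 0 (2 * Real.pi))).toReal + (μn (Set.Icc 0 (2 * Real.pi))).toReal ≤ m / 2 ∧
    ∀ z ∈ unitDisk, p z =
      (∫ t in Set.Icc 0 (2 * Real.pi), pmKernel z t ∂μp) -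
      (∫ t in Set.Icc 0 (2 * Real.pi), pmKernel z t ∂μn)

/-- `p ∈ P_m(β)` iff `p = β + (1 - β) q` on the unit disk for some `q ∈ P_m`. -/
def MemPmBeta (m β : ℝ) (p : ℂ → ℂ) : Prop :=
  ∃ q : ℂ → ℂ, MemPm m q ∧ ∀ z ∈ unitDisk, p z = (β : ℂ) + (1 - (β : ℂ)) * q z

/-- `f` and `g` form a bi-univalent pair: `f` is analytic and injective on the unit disk with
`f 0 = 0`, `f' 0 = 1`, and `g` is the univalent analytic continuation of `f⁻¹` to the unit
disk: `g` is analytic and injective on the unit disk, `g 0 = 0`, and `f (g w) = w` for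
`|w| < 1/4`. -/
def BiUnivalentPair (f g : ℂ → ℂ) : Prop :=
  AnalyticOnNhd ℂ f unitDisk ∧ f 0 = 0 ∧ deriv f 0 = 1 ∧ Set.InjOn f unitDisk ∧
  AnalyticOnNhd ℂ g unitDisk ∧ Set.InjOn g unitDisk ∧ g 0 = 0 ∧
  ∀ w : ℂ, ‖w‖ < 1 / 4 → f (g w) = w

/-- MacLaurin coefficients of the Hadamard convolution `f ∗ k`. -/
def hadCoeff (f k : ℂ → ℂ) (n : ℕ) : ℂ :=
  if n = 0 then 0 else if n = 1 then 1 else mc f n * mc k n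

/-- The Hadamard convolution `F(z) = (f ∗ k)(z) = z + ∑_{n≥2} a_n k_n z^n`. -/
def hadFun (f k : ℂ → ℂ) (z : ℂ) : ℂ := ∑' n : ℕ, hadCoeff f k n * z ^ n

/-- The expression `(1-α) z F'(z)/F(z) + α (1 + z F''(z)/F'(z))`, extended by `1` at the
origin. -/
def bvOp (α : ℂ) (F : ℂ → ℂ) (z : ℂ) : ℂ :=
  if z = 0 then 1
  else (1 - α) * (z * deriv F z / F z) + α * (1 + z * deriv (deriv F) z / deriv F z)

/-- `f ∈ BV^k(m; α, β)`: `f` is bi-univalent with inverse `g`, the convolutions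
`F = f ∗ k` and `G = g ∗ k` converge on the unit disk, do not vanish on the punctured disk,
have non-vanishing derivative on the disk, and both
`(1-α) z F'/F + α (1 + z F''/F')` and `(1-α) w G'/G + α (1 + w G''/G')` belong to
`P_m(β)`. -/
def MemBV (m β : ℝ) (α : ℂ) (k f g : ℂ → ℂ) : Prop :=
  BiUnivalentPair f g ∧
  (∀ z ∈ unitDisk, Summable fun n : ℕ => hadCoeff f k n * z ^ n) ∧
  (∀ w ∈ unitDisk, Summable fun n : ℕ => hadCoeff g k n * w ^ n) ∧
  (∀ z ∈ unitDisk, z ≠ 0 → hadFun f k z ≠ 0) ∧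
  (∀ w ∈ unitDisk, w ≠ 0 → hadFun g k w ≠ 0) ∧
  (∀ z ∈ unitDisk, deriv (hadFun f k) z ≠ 0) ∧
  (∀ w ∈ unitDisk, deriv (hadFun g k) w ≠ 0) ∧
  MemPmBeta m β (bvOp α (hadFun f k)) ∧ MemPmBeta m β (bvOp α (hadFun g k))

/-!
Every Taylor coefficient of `q ∈ P_m` is the integral of `2 (-e^{it})ⁿ` against a signed measure of
total variation at most `m / 2`, so the coefficients of a function in `P_m(β)` are bounded by
`m (1 - β)`. Expanding `(1-α) zF'/F + α (1 + zF''/F')` for `F = z + c₂ z² + c₃ z³ + ⋯` gives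
first and second coefficients `(1+α) c₂` and `2(1+2α) c₃ - (1+3α) c₂²`; for `f` this yields the
linear bound. Inverting `f` gives `b₂ = -a₂` and `b₃ = 2a₂² - a₃`, so adding the second coefficients
for `f` and `f⁻¹` cancels `a₃` and leaves `2 a₂² (2(1+2α) k₃ - (1+3α) k₂²)`: the square-root bound.
-/

open Filter Topology Finset

section TaylorCoefficients

variable {f g u : ℂ → ℂ}

lemma mc_zero (f : ℂ → ℂ) : mc f 0 = f 0 := by
  simp [mc]

lemma mc_one (f : ℂ → ℂ) : mc f 1 = deriv f 0 := by
  simp [mc]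

lemma mc_id (n : ℕ) : mc id n = if n = 1 then 1 else 0 := by
  rw [mc, iteratedDeriv_id]
  split_ifs <;> simp_all

lemma mc_congr (h : f =ᶠ[𝓝 0] g) (n : ℕ) : mc f n = mc g n := by
  rw [mc, mc, h.iteratedDeriv_eq]

lemma mc_deriv (f : ℂ → ℂ) (n : ℕ) : mc (deriv f) n = (n + 1) * mc f (n + 1) := by
  rw [mc, mc, ← iteratedDeriv_succ', Nat.factorial_succ]
  push_cast
  field_simp

lemma mc_const_mul (c : ℂ) (f : ℂ → ℂ) (n : ℕ) : mc (fun z => c * f z) n = c * mc f n := by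
  simp [mc, mul_div_assoc]

lemma mc_const_add (c : ℂ) (f : ℂ → ℂ) {n : ℕ} (hn : 0 < n) :
    mc (fun z => c + f z) n = mc f n := by
  rw [mc, mc, iteratedDeriv_const_add hn]

lemma mc_add (hf : AnalyticAt ℂ f 0) (hg : AnalyticAt ℂ g 0) (n : ℕ) :
    mc (fun z => f z + g z) n = mc f n + mc g n := by
  rw [mc, mc, mc, iteratedDeriv_fun_add hf.contDiffAt hg.contDiffAt, add_div]

lemma mc_mul (hf : AnalyticAt ℂ f 0) (hg : AnalyticAt ℂ g 0) (n : ℕ) :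
    mc (f * g) n = ∑ i ∈ range (n + 1), mc f i * mc g (n - i) := by
  rw [mc, iteratedDeriv_mul hf.contDiffAt hg.contDiffAt, sum_div]
  refine sum_congr rfl fun i hi => ?_
  rw [Nat.cast_choose ℂ (Nat.lt_succ_iff.mp (mem_range.mp hi)), mc, mc]
  field_simp [Nat.factorial_ne_zero]

lemma mc_id_mul (hf : AnalyticAt ℂ f 0) (n : ℕ) : mc (fun z => z * f z) (n + 1) = mc f n := by
  rw [show (fun z => z * f z) = id * f from rfl, mc_mul analyticAt_id hf,
    sum_eq_single 1 (fun i _ hi => by simp [mc_id, hi]) (by simp), mc_id]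
  simp

lemma mc_mul_div_cancel (hu : AnalyticAt ℂ u 0) (hf : AnalyticAt ℂ f 0) (hf0 : f 0 ≠ 0)
    (n : ℕ) : ∑ i ∈ range (n + 1), mc (u / f) i * mc f (n - i) = mc u n := by
  rw [← mc_mul (hu.div hf hf0) hf]
  refine mc_congr ?_ n
  filter_upwards [hf.continuousAt.eventually_ne hf0] with z hz
  simp [div_mul_cancel₀ _ hz]

end TaylorCoefficients

section Composition

variable {f g : ℂ → ℂ}

lemma mc_comp_succ (hf : AnalyticAt ℂ f 0) (hg : AnalyticAt ℂ g 0) (hg0 : g 0 = 0) (n : ℕ) :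
    (n + 1) * mc (f ∘ g) (n + 1) =
      ∑ i ∈ range (n + 1), mc (deriv f ∘ g) i * mc (deriv g) (n - i) := by
  have hf' : AnalyticAt ℂ f (g 0) := by rwa [hg0]
  rw [← mc_deriv, ← mc_mul (hf'.deriv.comp hg) hg.deriv]
  refine mc_congr ?_ n
  have hgu : ∀ᶠ z in 𝓝 0, AnalyticAt ℂ f (g z) :=
    hg.continuousAt.tendsto.eventually hf'.eventually_analyticAt
  filter_upwards [hgu, hg.eventually_analyticAt] with z hfz hgz
  exact deriv_comp z hfz.differentiableAt hgz.differentiableAt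

lemma mc_comp_zero (hg0 : g 0 = 0) (f : ℂ → ℂ) : mc (f ∘ g) 0 = mc f 0 := by
  simp [mc_zero, hg0]

variable (hf : AnalyticAt ℂ f 0) (hg : AnalyticAt ℂ g 0) (hg0 : g 0 = 0)
include hf hg hg0

lemma mc_comp_one : mc (f ∘ g) 1 = mc f 1 * mc g 1 := by
  have h := mc_comp_succ hf hg hg0 0
  simp only [zero_add, sum_range_one, mc_comp_zero hg0, mc_deriv] at h
  norm_num at h
  exact h

lemma mc_comp_two : mc (f ∘ g) 2 = mc f 1 * mc g 2 + mc f 2 * mc g 1 ^ 2 := by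
  have h := mc_comp_succ hf hg hg0 1
  have h1 := mc_comp_one hf.deriv hg hg0
  simp only [sum_range_succ, sum_range_zero, mc_comp_zero hg0, mc_deriv] at h h1
  norm_num at h h1
  linear_combination h / 2 + mc g 1 * h1 / 2

lemma mc_comp_three :
    mc (f ∘ g) 3 = mc f 1 * mc g 3 + 2 * mc f 2 * mc g 1 * mc g 2 + mc f 3 * mc g 1 ^ 3 := by
  have h := mc_comp_succ hf hg hg0 2
  have h1 := mc_comp_one hf.deriv hg hg0
  have h2 := mc_comp_two hf.deriv hg hg0
  simp only [sum_range_succ, sum_range_zero, mc_comp_zero hg0, mc_deriv] at h h1 h2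
  norm_num at h h1 h2
  linear_combination h / 3 + 2 * mc g 2 * h1 / 3 + mc g 1 * h2 / 3

lemma mc_two_three_of_comp_eq_id (hf1 : deriv f 0 = 1)
    (hfg : f ∘ g =ᶠ[𝓝 0] id) :
    mc g 2 = -mc f 2 ∧ mc g 3 = 2 * mc f 2 ^ 2 - mc f 3 := by
  have hid : ∀ n, mc (f ∘ g) n = mc id n := mc_congr hfg
  have h1 := mc_comp_one hf hg hg0
  have h2 := mc_comp_two hf hg hg0
  have h3 := mc_comp_three hf hg hg0
  rw [hid, mc_id, mc_one, hf1] at h1 h2 h3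
  norm_num at h1 h2 h3
  rw [← h1] at h2 h3
  exact ⟨by linear_combination -h2, by linear_combination -h3 + 2 * mc f 2 * h2⟩

end Composition

section PowerSeries

open FormalMultilinearSeries
open scoped NNReal

variable {c : ℕ → ℂ} {f : ℂ → ℂ}

lemma hasFPowerSeriesOnBall_of_hasSum {r : ℝ≥0} (hr : 0 < r)
    (h : ∀ z ∈ ball (0 : ℂ) r, HasSum (fun n => c n * z ^ n) (f z)) :
    HasFPowerSeriesOnBall f (ofScalars ℂ c) 0 r := by
  refine ⟨ENNReal.le_of_forall_nnreal_lt fun s hs => ?_, by simpa using hr, fun {y} hy => ?_⟩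
  · have hs' : (s : ℂ) ∈ ball (0 : ℂ) r := by
      simpa using (show (s : ℝ) < r from mod_cast hs)
    refine (ofScalars ℂ c).le_radius_of_tendsto (l := 0) ?_
    simpa [ofScalars_norm] using (h _ hs').summable.tendsto_atTop_zero.norm
  · have hy' : y ∈ ball (0 : ℂ) r := by
      simpa [← edist_zero_right, edist_dist, ENNReal.ofReal_lt_iff_lt_toReal] using hy
    simpa [ofScalars_apply_eq, mul_comm] using h y hy'

lemma mc_eq_of_hasFPowerSeriesAt (h : HasFPowerSeriesAt f (ofScalars ℂ c) 0) : mc f = c :=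
  ofScalars_series_injective ℂ ℂ (h.analyticAt.hasFPowerSeriesAt.eq_formalMultilinearSeries h)

end PowerSeries

lemma AnalyticAt.dslope {𝕜 E : Type*} [NontriviallyNormedField 𝕜] [NormedAddCommGroup E]
    [NormedSpace 𝕜 E] {f : 𝕜 → E} {a : 𝕜} (hf : AnalyticAt 𝕜 f a) :
    AnalyticAt 𝕜 (dslope f a) a :=
  let ⟨_, hp⟩ := hf
  ⟨_, hp.has_fpower_series_dslope_fslope⟩

section BVOperator

variable {F : ℂ → ℂ} (hF : AnalyticAt ℂ F 0) (hF0 : F 0 = 0) (hF1 : deriv F 0 = 1)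

include hF0 in
lemma eq_mul_dslope (z : ℂ) : F z = z * dslope F 0 z := by
  simpa [hF0] using (sub_smul_dslope F 0 z).symm

-- Off `0` the factor `z` cancels from `z F' / (z · dslope F 0)`; where `dslope F 0`
-- vanishes both sides are `0` by the convention `x / 0 = 0`.
include hF0 hF1 in
lemma bvOp_eq_of_map_zero (α : ℂ) :
    bvOp α F = fun z =>
      (1 - α) * (deriv F / dslope F 0) z + α * (1 + z * (deriv (deriv F) / deriv F) z) := by
  funext z
  rcases eq_or_ne z 0 with rfl | hz
  · simp [bvOp, dslope_same, hF1]
  · simp only [bvOp, if_neg hz, Pi.div_apply, eq_mul_dslope hF0 z, mul_div_mul_left _ _ hz,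
      mul_div_assoc]

include hF hF0 hF1

lemma mc_deriv_div_dslope :
    mc (deriv F / dslope F 0) 1 = mc F 2 ∧
      mc (deriv F / dslope F 0) 2 = 2 * mc F 3 - mc F 2 ^ 2 := by
  have hE := hF.dslope
  have hEF : ∀ n, mc (dslope F 0) n = mc F (n + 1) := fun n => by
    rw [← mc_id_mul hE]
    exact congrArg (mc · (n + 1)) (funext (eq_mul_dslope hF0)).symm
  have h := mc_mul_div_cancel hF.deriv hE (by simp [dslope_same, hF1])
  have hF1' : mc F 1 = 1 := by rw [mc_one, hF1]
  have h0 := h 0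
  have h1 := h 1
  have h2 := h 2
  simp only [sum_range_succ, sum_range_zero, hEF, mc_deriv, hF1'] at h0 h1 h2
  norm_num at h0 h1 h2
  rw [h0] at h1 h2
  exact ⟨by linear_combination h1, by linear_combination h2 - mc F 2 * h1⟩

omit hF0 in
lemma mc_deriv_deriv_div_deriv :
    mc (deriv (deriv F) / deriv F) 0 = 2 * mc F 2 ∧
      mc (deriv (deriv F) / deriv F) 1 = 6 * mc F 3 - 4 * mc F 2 ^ 2 := by
  have hF1' : mc F 1 = 1 := by rw [mc_one, hF1]
  have h := mc_mul_div_cancel hF.deriv.deriv hF.deriv (by simp [hF1])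
  have h0 := h 0
  have h1 := h 1
  simp only [sum_range_succ, sum_range_zero, mc_deriv, hF1'] at h0 h1
  norm_num at h0 h1
  rw [h0] at h1
  exact ⟨h0, by linear_combination h1⟩

lemma mc_bvOp_succ (α : ℂ) (n : ℕ) :
    mc (bvOp α F) (n + 1) =
      (1 - α) * mc (deriv F / dslope F 0) (n + 1) + α * mc (deriv (deriv F) / deriv F) n := by
  have hP : AnalyticAt ℂ (deriv F / dslope F 0) 0 :=
    hF.deriv.div hF.dslope (by simp [dslope_same, hF1])
  have hS : AnalyticAt ℂ (deriv (deriv F) / deriv F) 0 :=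
    hF.deriv.deriv.div hF.deriv (by simp [hF1])
  rw [bvOp_eq_of_map_zero hF0 hF1, mc_add (by fun_prop) (by fun_prop), mc_const_mul, mc_const_mul,
    mc_const_add _ _ n.succ_pos, mc_id_mul hS]

lemma mc_bvOp_one (α : ℂ) : mc (bvOp α F) 1 = (1 + α) * mc F 2 := by
  rw [mc_bvOp_succ hF hF0 hF1, (mc_deriv_div_dslope hF hF0 hF1).1,
    (mc_deriv_deriv_div_deriv hF hF1).1]
  ring

lemma mc_bvOp_two (α : ℂ) :
    mc (bvOp α F) 2 = 2 * (1 + 2 * α) * mc F 3 - (1 + 3 * α) * mc F 2 ^ 2 := by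
  rw [mc_bvOp_succ hF hF0 hF1, (mc_deriv_div_dslope hF hF0 hF1).2,
    (mc_deriv_deriv_div_deriv hF hF1).2]
  ring

end BVOperator

section HerglotzKernel

-- From `(1 - w) / (1 + w) = 2 ∑ (-w)ⁿ - 1` with `w = z e^{it}`.
def pmCoeff (n : ℕ) (t : ℝ) : ℂ :=
  if n = 0 then 1 else 2 * (-Complex.exp (t * Complex.I)) ^ n

lemma norm_pmCoeff_le (n : ℕ) (t : ℝ) : ‖pmCoeff n t‖ ≤ 2 := by
  unfold pmCoeff
  split_ifs <;> simp [norm_exp_ofReal_mul_I]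

lemma continuous_pmCoeff (n : ℕ) : Continuous (pmCoeff n) := by
  unfold pmCoeff
  split_ifs <;> fun_prop

lemma hasSum_pmCoeff_mul_pow {z : ℂ} (hz : ‖z‖ < 1) (t : ℝ) :
    HasSum (fun n => pmCoeff n t * z ^ n) (pmKernel z t) := by
  have hw : ‖-(z * Complex.exp (t * Complex.I))‖ < 1 := by simpa [norm_exp_ofReal_mul_I] using hz
  have hw1 : 1 + z * Complex.exp (t * Complex.I) ≠ 0 := fun h => by
    rw [show z * Complex.exp (t * Complex.I) = -1 by linear_combination h] at hw
    simp at hw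
  have hcoeff : (fun n => pmCoeff n t * z ^ n) = fun n =>
      2 * (-(z * Complex.exp (t * Complex.I))) ^ n - if n = 0 then 1 else 0 := by
    funext n
    rcases eq_or_ne n 0 with rfl | hn
    · norm_num [pmCoeff]
    · simp [pmCoeff, hn]
      ring
  have hsum : pmKernel z t = 2 * (1 - -(z * Complex.exp (t * Complex.I)))⁻¹ - 1 := by
    rw [pmKernel, sub_neg_eq_add]
    field_simp
    ring
  rw [hcoeff, hsum]
  exact ((hasSum_geometric_of_norm_lt_one hw).mul_left 2).sub (hasSum_ite_eq 0 1)

variable (ν : Measure ℝ) [IsFiniteMeasure ν]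

lemma hasSum_integral_pmKernel {z : ℂ} (hz : ‖z‖ < 1) :
    HasSum (fun n => (∫ t, pmCoeff n t ∂ν) * z ^ n) (∫ t, pmKernel z t ∂ν) := by
  simp_rw [← integral_mul_const]
  refine hasSum_integral_of_dominated_convergence (fun n _ => 2 * ‖z‖ ^ n)
    (fun n => ((continuous_pmCoeff n).mul continuous_const).aestronglyMeasurable)
    (fun n => Eventually.of_forall fun t => ?_)
    (Eventually.of_forall fun _ => (summable_geometric_of_lt_one (norm_nonneg z) hz).mul_left 2)
    (integrable_const _) (Eventually.of_forall (hasSum_pmCoeff_mul_pow hz))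
  rw [norm_mul, norm_pow]
  exact mul_le_mul_of_nonneg_right (norm_pmCoeff_le n t) (by positivity)

end HerglotzKernel

section ClassP

open scoped NNReal

variable {m β : ℝ} {p q : ℂ → ℂ}

lemma MemPm.norm_mc_le (hq : MemPm m q) (n : ℕ) : ‖mc q n‖ ≤ m := by
  obtain ⟨-, -, μp, μn, _, _, -, hvar, hrep⟩ := hq
  set S := Set.Icc 0 (2 * Real.pi)
  have hsum : ∀ z ∈ ball (0 : ℂ) (1 : ℝ≥0), HasSum (fun n =>
      ((∫ t in S, pmCoeff n t ∂μp) - ∫ t in S, pmCoeff n t ∂μn) * z ^ n) (q z) := fun z hz => by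
    have hz' : ‖z‖ < 1 := by simpa using hz
    simpa only [hrep z (by simpa [unitDisk] using hz), sub_mul] using
      (hasSum_integral_pmKernel _ hz').sub (hasSum_integral_pmKernel _ hz')
  rw [mc_eq_of_hasFPowerSeriesAt (hasFPowerSeriesOnBall_of_hasSum one_pos hsum).hasFPowerSeriesAt]
  have hbound : ∀ μ : Measure ℝ, [IsFiniteMeasure μ] →
      ‖∫ t in S, pmCoeff n t ∂μ‖ ≤ 2 * μ.real S := fun μ _ =>
    norm_setIntegral_le_of_norm_le_const (measure_lt_top μ S) fun t _ => norm_pmCoeff_le n t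
  calc _ ≤ ‖∫ t in S, pmCoeff n t ∂μp‖ + ‖∫ t in S, pmCoeff n t ∂μn‖ := norm_sub_le _ _
    _ ≤ 2 * μp.real S + 2 * μn.real S := add_le_add (hbound μp) (hbound μn)
    _ ≤ m := by simp only [measureReal_def]; linarith

lemma MemPmBeta.norm_mc_le (hβ : β ≤ 1) (hp : MemPmBeta m β p) {n : ℕ} (hn : 0 < n) :
    ‖mc p n‖ ≤ m * (1 - β) := by
  obtain ⟨q, hq, hpq⟩ := hp
  have hpq' : p =ᶠ[𝓝 0] fun z => (β : ℂ) + (1 - β) * q z :=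
    eventually_of_mem (ball_mem_nhds 0 one_pos) hpq
  rw [mc_congr hpq', mc_const_add _ _ hn, mc_const_mul, norm_mul, mul_comm,
    show (1 - β : ℂ) = ((1 - β : ℝ) : ℂ) by push_cast; rfl, Complex.norm_real,
    Real.norm_of_nonneg (by linarith)]
  exact mul_le_mul_of_nonneg_right (hq.norm_mc_le n) (by linarith)

end ClassP

open scoped NNReal in
lemma hasFPowerSeriesOnBall_hadFun {f k : ℂ → ℂ}
    (hs : ∀ z ∈ unitDisk, Summable fun n => hadCoeff f k n * z ^ n) :
    HasFPowerSeriesOnBall (hadFun f k)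
      (FormalMultilinearSeries.ofScalars ℂ (hadCoeff f k)) 0 (1 : ℝ≥0) :=
  hasFPowerSeriesOnBall_of_hasSum one_pos fun z hz =>
    (hs z (by simpa [unitDisk] using hz)).hasSum

lemma norm_coeff_le_of_memPmBeta_bvOp_hadFun {m β : ℝ} {α : ℂ} {f k : ℂ → ℂ} (hβ : β ≤ 1)
    (hs : ∀ z ∈ unitDisk, Summable fun n => hadCoeff f k n * z ^ n)
    (hP : MemPmBeta m β (bvOp α (hadFun f k))) :
    ‖(1 + α) * (mc f 2 * mc k 2)‖ ≤ m * (1 - β) ∧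
      ‖2 * (1 + 2 * α) * (mc f 3 * mc k 3) - (1 + 3 * α) * (mc f 2 * mc k 2) ^ 2‖ ≤
        m * (1 - β) := by
  have hF := hasFPowerSeriesOnBall_hadFun hs
  have hmc := mc_eq_of_hasFPowerSeriesAt hF.hasFPowerSeriesAt
  have hF0 : hadFun f k 0 = 0 := by simpa [mc_zero, hadCoeff] using congrFun hmc 0
  have hF1 : deriv (hadFun f k) 0 = 1 := by simpa [mc_one, hadCoeff] using congrFun hmc 1
  have h1 := hP.norm_mc_le hβ one_pos
  have h2 := hP.norm_mc_le hβ two_pos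
  rw [mc_bvOp_one hF.analyticAt hF0 hF1, hmc] at h1
  rw [mc_bvOp_two hF.analyticAt hF0 hF1, hmc] at h2
  exact ⟨h1, h2⟩

lemma BiUnivalentPair.mc_inv {f g : ℂ → ℂ} (h : BiUnivalentPair f g) :
    mc g 2 = -mc f 2 ∧ mc g 3 = 2 * mc f 2 ^ 2 - mc f 3 := by
  obtain ⟨hf, -, hf1, -, hg, -, hg0, hfg⟩ := h
  have h0 : (0 : ℂ) ∈ unitDisk := mem_ball_self one_pos
  refine mc_two_three_of_comp_eq_id (hf 0 h0) (hg 0 h0) hg0 hf1 ?_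
  filter_upwards [ball_mem_nhds (0 : ℂ) (by norm_num : (0 : ℝ) < 1 / 4)] with w hw
  exact hfg w (by simpa using hw)

theorem BV_a2_bound_general (m β : ℝ) (hβ1 : β < 1)
    (α : ℂ) (hα : α ≠ -1)
    (k f g : ℂ → ℂ)
    (hk2 : mc k 2 ≠ 0)
    (hD : 2 * (1 + 2 * α) * mc k 3 - (1 + 3 * α) * mc k 2 ^ 2 ≠ 0)
    (hf : MemBV m β α k f g) :
    ‖mc f 2‖ ≤
      min
        (Real.sqrt (m * (1 - β) /
          ‖2 * (1 + 2 * α) * mc k 3 - (1 + 3 * α) * mc k 2 ^ 2‖))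
        (m * (1 - β) / (‖1 + α‖ * ‖mc k 2‖)) := by
  obtain ⟨hfg, hsF, hsG, -, -, -, -, hPF, hPG⟩ := hf
  obtain ⟨hF1, hF2⟩ := norm_coeff_le_of_memPmBeta_bvOp_hadFun hβ1.le hsF hPF
  obtain ⟨-, hG2⟩ := norm_coeff_le_of_memPmBeta_bvOp_hadFun hβ1.le hsG hPG
  obtain ⟨hg2, hg3⟩ := hfg.mc_inv
  set D := 2 * (1 + 2 * α) * mc k 3 - (1 + 3 * α) * mc k 2 ^ 2
  have hsq : ‖mc f 2‖ ^ 2 * ‖D‖ ≤ m * (1 - β) := by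
    have key : 2 * (mc f 2 ^ 2 * D) =
        (2 * (1 + 2 * α) * (mc f 3 * mc k 3) - (1 + 3 * α) * (mc f 2 * mc k 2) ^ 2) +
          (2 * (1 + 2 * α) * (mc g 3 * mc k 3) - (1 + 3 * α) * (mc g 2 * mc k 2) ^ 2) := by
      rw [hg2, hg3]; ring
    have := (norm_add_le _ _).trans (add_le_add hF2 hG2)
    rw [← key, norm_mul, norm_mul, norm_pow, Complex.norm_two] at this
    linarith
  have hα' : 0 < ‖1 + α‖ := norm_pos_iff.mpr fun h => hα (by linear_combination h)
  refine le_min (Real.le_sqrt_of_sq_le ?_) ?_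
  · rwa [le_div_iff₀ (norm_pos_iff.mpr hD)]
  · rw [le_div_iff₀ (mul_pos hα' (norm_pos_iff.mpr hk2))]
    calc _ = ‖(1 + α) * (mc f 2 * mc k 2)‖ := by rw [norm_mul, norm_mul]; ring
      _ ≤ _ := hF1

/-- Theorem 2.2, bound for `|a₂|` in the class `BV^k(m; α, β)`. -/
theorem BV_a2_bound (m β : ℝ) (hm : 2 ≤ m) (hβ0 : 0 ≤ β) (hβ1 : β < 1)
    (α : ℂ) (hα : α ≠ -1)
    (k kinv f g : ℂ → ℂ) (hk : BiUnivalentPair k kinv)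
    (hk2 : mc k 2 ≠ 0) (hk3 : mc k 3 ≠ 0)
    (hD : 2 * (1 + 2 * α) * mc k 3 - (1 + 3 * α) * mc k 2 ^ 2 ≠ 0)
    (hf : MemBV m β α k f g) :
    ‖mc f 2‖ ≤
      min
        (Real.sqrt (m * (1 - β) /
          ‖2 * (1 + 2 * α) * mc k 3 - (1 + 3 * α) * mc k 2 ^ 2‖))
        (m * (1 - β) / (‖1 + α‖ * ‖mc k 2‖)) :=
  BV_a2_bound_general m β hβ1 α hα k f g hk2 hD hf
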